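/- SFT on products: the string Fourier transform maps operator products in hom(𝓗₋₊) to convolution products in hom(𝓗₊₋), i.e. 𝔉ₛ(ST) = 𝔉ₛ(S) * 𝔉ₛ(T) for all S, T ∈ hom(𝓗₋₊). -/

import Mathlib

/-!
Fix an orthonormal basis `b` of `𝓗₊`. Then `Y* (x ⊗ y) = ∑ᵢ (x ⊗ θ bᵢ) ⊗ (bᵢ ⊗ y)`, so by the
defining property of `𝔉ₛ` the matrix coefficient `⟪x ⊗ y, (𝔉ₛ S * 𝔉ₛ T) (x' ⊗ y')⟫` equals
`∑ᵢⱼ ⟪θ x' ⊗ x, S eⱼᵢ⟫ ⟪eⱼᵢ, T (y' ⊗ θ⁻¹ y)⟫` with `eⱼᵢ = θ bⱼ ⊗ bᵢ`. These `eⱼᵢ` form an orthonormal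
basis of `𝓗₋₊`, so Parseval collapses the sum to `⟪θ x' ⊗ x, S T (y' ⊗ θ⁻¹ y)⟫`, the matrix
coefficient of `𝔉ₛ (S T)`.
-/

open scoped ComplexInnerProductSpace InnerProductSpace

section

variable {𝕜 E F G : Type*} [RCLike 𝕜]
  [NormedAddCommGroup E] [InnerProductSpace 𝕜 E]
  [NormedAddCommGroup F] [InnerProductSpace 𝕜 F]
  [NormedAddCommGroup G] [InnerProductSpace 𝕜 G]

theorem Submodule.top_le_span_image2 {R M N P : Type*} [CommSemiring R]
    [AddCommMonoid M] [Module R M] [AddCommMonoid N] [Module R N]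
    [AddCommMonoid P] [Module R P] (f : M →ₗ[R] N →ₗ[R] P) {s : Set M} {t : Set N}
    (hs : ⊤ ≤ Submodule.span R s) (ht : ⊤ ≤ Submodule.span R t)
    (hf : ⊤ ≤ Submodule.span R (Set.range fun p : M × N => f p.1 p.2)) :
    ⊤ ≤ Submodule.span R (Set.image2 (fun m n => f m n) s t) := by
  rw [← Submodule.map₂_span_span, top_le_iff.1 hs, top_le_iff.1 ht,
    Submodule.map₂_eq_span_image2]
  simpa [← Set.image_uncurry_prod, Function.uncurry_def] using hf

theorem ext_inner_left_of_top_le_span {s : Set E} (hs : ⊤ ≤ Submodule.span 𝕜 s) {x y : E}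
    (h : ∀ v ∈ s, ⟪v, x⟫_𝕜 = ⟪v, y⟫_𝕜) : x = y := by
  have : (innerₛₗ 𝕜).flip x = (innerₛₗ 𝕜).flip y := LinearMap.ext_on (top_le_iff.1 hs) h
  exact ext_inner_left 𝕜 fun v => LinearMap.congr_fun this v

theorem ContinuousLinearMap.ext_inner_of_top_le_span {s : Set E} {t : Set F}
    (hs : ⊤ ≤ Submodule.span 𝕜 s) (ht : ⊤ ≤ Submodule.span 𝕜 t) {A B : E →L[𝕜] F}
    (h : ∀ v ∈ t, ∀ w ∈ s, ⟪v, A w⟫_𝕜 = ⟪v, B w⟫_𝕜) : A = B :=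
  ContinuousLinearMap.coe_injective <| LinearMap.ext_on (top_le_iff.1 hs) fun w hw =>
    ext_inner_left_of_top_le_span ht fun v hv => h v hv w hw

theorem Orthonormal.bilinear {ι κ : Type*} {e : ι → E} {f : κ → F}
    (he : Orthonormal 𝕜 e) (hf : Orthonormal 𝕜 f) (t : E →ₗ[𝕜] F →ₗ[𝕜] G)
    (ht : ∀ x y x' y', ⟪t x y, t x' y'⟫_𝕜 = ⟪x, x'⟫_𝕜 * ⟪y, y'⟫_𝕜) :
    Orthonormal 𝕜 fun p : ι × κ => t (e p.1) (f p.2) := by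
  classical
  rw [orthonormal_iff_ite] at he hf ⊢
  rintro ⟨i, k⟩ ⟨i', k'⟩
  rw [ht, he, hf]
  by_cases hi : i = i' <;> by_cases hk : k = k' <;> simp [hi, hk]

namespace OrthonormalBasis

variable {ι κ : Type*} [Fintype ι] [Fintype κ]

protected noncomputable def ofBilinear (e : OrthonormalBasis ι 𝕜 E) (f : OrthonormalBasis κ 𝕜 F)
    (t : E →ₗ[𝕜] F →ₗ[𝕜] G) (ht : ∀ x y x' y', ⟪t x y, t x' y'⟫_𝕜 = ⟪x, x'⟫_𝕜 * ⟪y, y'⟫_𝕜)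
    (hspan : ⊤ ≤ Submodule.span 𝕜 (Set.range fun p : E × F => t p.1 p.2)) :
    OrthonormalBasis (ι × κ) 𝕜 G :=
  OrthonormalBasis.mk (e.orthonormal.bilinear f.orthonormal t ht) <| by
    refine (Submodule.top_le_span_image2 t e.toBasis.span_eq.ge f.toBasis.span_eq.ge
      hspan).trans (Submodule.span_mono ?_)
    rintro _ ⟨_, ⟨i, rfl⟩, _, ⟨k, rfl⟩, rfl⟩
    exact ⟨(i, k), rfl⟩

@[simp]
theorem coe_ofBilinear (e : OrthonormalBasis ι 𝕜 E) (f : OrthonormalBasis κ 𝕜 F)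
    (t : E →ₗ[𝕜] F →ₗ[𝕜] G) (ht : ∀ x y x' y', ⟪t x y, t x' y'⟫_𝕜 = ⟪x, x'⟫_𝕜 * ⟪y, y'⟫_𝕜)
    (hspan : ⊤ ≤ Submodule.span 𝕜 (Set.range fun p : E × F => t p.1 p.2)) :
    ⇑(e.ofBilinear f t ht hspan) = fun p => t (e p.1) (f p.2) :=
  OrthonormalBasis.coe_mk _ _

protected noncomputable def mapAntiunitary (b : OrthonormalBasis ι 𝕜 E) (θ : E ≃ₗ⋆[𝕜] F)
    (hθ : ∀ x x', ⟪x, x'⟫_𝕜 = ⟪θ x', θ x⟫_𝕜) : OrthonormalBasis ι 𝕜 F :=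
  OrthonormalBasis.mk (v := fun i => θ (b i))
    (by
      classical
      rw [orthonormal_iff_ite]
      intro i j
      rw [← hθ, orthonormal_iff_ite.1 b.orthonormal]
      simp only [eq_comm])
    (by
      rw [Set.range_comp' θ b, ← LinearEquiv.coe_coe, Submodule.span_image, ← b.coe_toBasis,
        b.toBasis.span_eq, Submodule.map_top, LinearMap.range_eq_top.2 θ.surjective])

@[simp]
theorem coe_mapAntiunitary (b : OrthonormalBasis ι 𝕜 E) (θ : E ≃ₗ⋆[𝕜] F)
    (hθ : ∀ x x', ⟪x, x'⟫_𝕜 = ⟪θ x', θ x⟫_𝕜) :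
    ⇑(b.mapAntiunitary θ hθ) = fun i => θ (b i) :=
  OrthonormalBasis.coe_mk _ _

theorem sum_inner_map_mul_inner (b : OrthonormalBasis ι 𝕜 E) (S : E →ₗ[𝕜] F) (u : F) (v : E) :
    ∑ i, ⟪u, S (b i)⟫_𝕜 * ⟪b i, v⟫_𝕜 = ⟪u, S v⟫_𝕜 := by
  conv_rhs => rw [← b.sum_repr' v]
  simp only [map_sum, map_smul, inner_sum, inner_smul_right, mul_comm]

end OrthonormalBasis

end

section StringFourier

variable {Hp Hm Hpm H2 : Type*}
  [NormedAddCommGroup Hp] [InnerProductSpace ℂ Hp]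
  [NormedAddCommGroup Hm] [InnerProductSpace ℂ Hm]
  [NormedAddCommGroup Hpm] [InnerProductSpace ℂ Hpm] [CompleteSpace Hpm]
  [NormedAddCommGroup H2] [InnerProductSpace ℂ H2] [CompleteSpace H2]
  {ι : Type*} [Fintype ι]

theorem adjoint_apply_eq_sum_of_orthonormalBasis (θ : Hp ≃ₗ⋆[ℂ] Hm)
    (hθ : ∀ x x' : Hp, ⟪x, x'⟫ = ⟪θ x', θ x⟫) (tpm : Hp →ₗ[ℂ] Hm →ₗ[ℂ] Hpm)
    (htpm : ∀ x y x' y', ⟪tpm x y, tpm x' y'⟫ = ⟪x, x'⟫ * ⟪y, y'⟫)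
    (hpm_span : ⊤ ≤ Submodule.span ℂ (Set.range fun p : Hp × Hm => tpm p.1 p.2))
    (t2 : Hpm →ₗ[ℂ] Hpm →ₗ[ℂ] H2)
    (h2_span : ⊤ ≤ Submodule.span ℂ (Set.range fun p : Hpm × Hpm => t2 p.1 p.2))
    (ht2 : ∀ u v u' v', ⟪t2 u v, t2 u' v'⟫ = ⟪u, u'⟫ * ⟪v, v'⟫) (Y : H2 →L[ℂ] Hpm)
    (hY : ∀ x₁ y₁ x₂ y₂, Y (t2 (tpm x₁ y₁) (tpm x₂ y₂)) = ⟪θ.symm y₁, x₂⟫ • tpm x₁ y₂)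
    (b : OrthonormalBasis ι ℂ Hp) (x : Hp) (y : Hm) :
    Y.adjoint (tpm x y) = ∑ i, t2 (tpm x (θ (b i))) (tpm (b i) y) := by
  refine ext_inner_left_of_top_le_span
    (Submodule.top_le_span_image2 t2 hpm_span hpm_span h2_span) ?_
  rintro _ ⟨_, ⟨⟨x₁, y₁⟩, rfl⟩, _, ⟨⟨x₂, y₂⟩, rfl⟩, rfl⟩
  calc ⟪t2 (tpm x₁ y₁) (tpm x₂ y₂), Y.adjoint (tpm x y)⟫
      = ⟪x₂, θ.symm y₁⟫ * (⟪x₁, x⟫ * ⟪y₂, y⟫) := by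
        rw [ContinuousLinearMap.adjoint_inner_right, hY, inner_smul_left, htpm, inner_conj_symm]
    _ = ∑ i, ⟪x₂, b i⟫ * ⟪b i, θ.symm y₁⟫ * (⟪x₁, x⟫ * ⟪y₂, y⟫) := by
        rw [← Finset.sum_mul, b.sum_inner_mul_inner]
    _ = ⟪t2 (tpm x₁ y₁) (tpm x₂ y₂), ∑ i, t2 (tpm x (θ (b i))) (tpm (b i) y)⟫ := by
        rw [inner_sum]
        refine Finset.sum_congr rfl fun i _ => ?_
        rw [ht2, htpm, htpm, hθ (b i), θ.apply_symm_apply]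
        ring

theorem inner_convolution_apply (θ : Hp ≃ₗ⋆[ℂ] Hm)
    (hθ : ∀ x x' : Hp, ⟪x, x'⟫ = ⟪θ x', θ x⟫) (tpm : Hp →ₗ[ℂ] Hm →ₗ[ℂ] Hpm)
    (htpm : ∀ x y x' y', ⟪tpm x y, tpm x' y'⟫ = ⟪x, x'⟫ * ⟪y, y'⟫)
    (hpm_span : ⊤ ≤ Submodule.span ℂ (Set.range fun p : Hp × Hm => tpm p.1 p.2))
    (t2 : Hpm →ₗ[ℂ] Hpm →ₗ[ℂ] H2)
    (h2_span : ⊤ ≤ Submodule.span ℂ (Set.range fun p : Hpm × Hpm => t2 p.1 p.2))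
    (ht2 : ∀ u v u' v', ⟪t2 u v, t2 u' v'⟫ = ⟪u, u'⟫ * ⟪v, v'⟫) (Y : H2 →L[ℂ] Hpm)
    (hY : ∀ x₁ y₁ x₂ y₂, Y (t2 (tpm x₁ y₁) (tpm x₂ y₂)) = ⟪θ.symm y₁, x₂⟫ • tpm x₁ y₂)
    (tmap : (Hpm →L[ℂ] Hpm) → (Hpm →L[ℂ] Hpm) → (H2 →L[ℂ] H2))
    (htmap : ∀ A B u v, tmap A B (t2 u v) = t2 (A u) (B v))
    (b : OrthonormalBasis ι ℂ Hp) (A B : Hpm →L[ℂ] Hpm) (x x' : Hp) (y y' : Hm) :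
    ⟪tpm x y, (Y ∘L tmap A B ∘L Y.adjoint) (tpm x' y')⟫ =
      ∑ i, ∑ j, ⟪tpm x (θ (b i)), A (tpm x' (θ (b j)))⟫ * ⟪tpm (b i) y, B (tpm (b j) y')⟫ := by
  have hYadj := adjoint_apply_eq_sum_of_orthonormalBasis θ hθ tpm htpm hpm_span t2 h2_span ht2 Y
    hY b
  rw [ContinuousLinearMap.comp_apply, ContinuousLinearMap.comp_apply,
    ← ContinuousLinearMap.adjoint_inner_left, hYadj, hYadj, map_sum, sum_inner]
  simp only [htmap, inner_sum, ht2]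

end StringFourier

theorem sft_product_to_convolution_general
    {Hp Hm Hmp Hpm H2 : Type}
    [NormedAddCommGroup Hp] [InnerProductSpace ℂ Hp] [FiniteDimensional ℂ Hp]
    [NormedAddCommGroup Hm] [InnerProductSpace ℂ Hm]
    [NormedAddCommGroup Hmp] [InnerProductSpace ℂ Hmp]
    [NormedAddCommGroup Hpm] [InnerProductSpace ℂ Hpm] [FiniteDimensional ℂ Hpm]
    [NormedAddCommGroup H2] [InnerProductSpace ℂ H2] [FiniteDimensional ℂ H2]
(θ : Hp ≃ₗ⋆[ℂ] Hm)
    (hθ : ∀ x x' : Hp, ⟪x, x'⟫ = ⟪θ x', θ x⟫)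
(tmp : Hm →ₗ[ℂ] Hp →ₗ[ℂ] Hmp) (tpm : Hp →ₗ[ℂ] Hm →ₗ[ℂ] Hpm)
    (htmp : ∀ (y : Hm) (x : Hp) (y' : Hm) (x' : Hp),
      ⟪tmp y x, tmp y' x'⟫ = ⟪y, y'⟫ * ⟪x, x'⟫)
    (htpm : ∀ (x : Hp) (y : Hm) (x' : Hp) (y' : Hm),
      ⟪tpm x y, tpm x' y'⟫ = ⟪x, x'⟫ * ⟪y, y'⟫)
    (hmp_span : ⊤ ≤ Submodule.span ℂ (Set.range fun p : Hm × Hp => tmp p.1 p.2))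
    (hpm_span : ⊤ ≤ Submodule.span ℂ (Set.range fun p : Hp × Hm => tpm p.1 p.2))
(Fs : (Hmp →L[ℂ] Hmp) → (Hpm →L[ℂ] Hpm))
    (hFs : ∀ (T : Hmp →L[ℂ] Hmp) (x x' : Hp) (y y' : Hm),
      ⟪tpm x y, Fs T (tpm x' y')⟫ = ⟪tmp (θ x') x, T (tmp y' (θ.symm y))⟫)
(t2 : Hpm →ₗ[ℂ] Hpm →ₗ[ℂ] H2)
    (ht2 : ∀ (u v u' v' : Hpm), ⟪t2 u v, t2 u' v'⟫ = ⟪u, u'⟫ * ⟪v, v'⟫)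
    (h2_span : ⊤ ≤ Submodule.span ℂ (Set.range fun p : Hpm × Hpm => t2 p.1 p.2))
    (Y : H2 →L[ℂ] Hpm)
    (hY : ∀ (x₁ : Hp) (y₁ : Hm) (x₂ : Hp) (y₂ : Hm),
      Y (t2 (tpm x₁ y₁) (tpm x₂ y₂)) = ⟪θ.symm y₁, x₂⟫ • tpm x₁ y₂)
(tmap : (Hpm →L[ℂ] Hpm) → (Hpm →L[ℂ] Hpm) → (H2 →L[ℂ] H2))
    (htmap : ∀ (A B : Hpm →L[ℂ] Hpm) (u v : Hpm), tmap A B (t2 u v) = t2 (A u) (B v)) :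
    ∀ S T : Hmp →L[ℂ] Hmp,
      Fs (S ∘L T) = Y ∘L tmap (Fs S) (Fs T) ∘L ContinuousLinearMap.adjoint Y := by
  intro S T
  let b := stdOrthonormalBasis ℂ Hp
  let e := (b.mapAntiunitary θ hθ).ofBilinear b tmp htmp hmp_span
  refine ContinuousLinearMap.ext_inner_of_top_le_span hpm_span hpm_span ?_
  rintro _ ⟨⟨x, y⟩, rfl⟩ _ ⟨⟨x', y'⟩, rfl⟩
  calc ⟪tpm x y, Fs (S ∘L T) (tpm x' y')⟫
      = ⟪tmp (θ x') x, S (T (tmp y' (θ.symm y)))⟫ := hFs _ _ _ _ _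
    _ = ∑ i, ∑ j, ⟪tmp (θ x') x, S (e (j, i))⟫ * ⟪e (j, i), T (tmp y' (θ.symm y))⟫ := by
        rw [Finset.sum_comm, ← Fintype.sum_prod_type']
        exact (e.sum_inner_map_mul_inner (S : Hmp →ₗ[ℂ] Hmp) _ _).symm
    _ = ∑ i, ∑ j, ⟪tpm x (θ (b i)), Fs S (tpm x' (θ (b j)))⟫ *
          ⟪tpm (b i) y, Fs T (tpm (b j) y')⟫ := by
        simp only [e, OrthonormalBasis.coe_ofBilinear, OrthonormalBasis.coe_mapAntiunitary, hFs,
          θ.symm_apply_apply]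
    _ = _ := (inner_convolution_apply θ hθ tpm htpm hpm_span t2 h2_span ht2 Y hY tmap htmap b
          (Fs S) (Fs T) x x' y y').symm

/-- **SFT on products.** The string Fourier transform maps operator products in
`hom(𝓗₋₊)` to convolution products in `hom(𝓗₊₋)`:
`𝔉ₛ(ST) = 𝔉ₛ(S) * 𝔉ₛ(T) = Y (𝔉ₛ(S) ⊗ 𝔉ₛ(T)) Y*`. -/
theorem sft_product_to_convolution
    {Hp Hm Hmp Hpm H2 : Type}
    [NormedAddCommGroup Hp] [InnerProductSpace ℂ Hp] [FiniteDimensional ℂ Hp]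
    [NormedAddCommGroup Hm] [InnerProductSpace ℂ Hm] [FiniteDimensional ℂ Hm]
    [NormedAddCommGroup Hmp] [InnerProductSpace ℂ Hmp] [FiniteDimensional ℂ Hmp]
    [NormedAddCommGroup Hpm] [InnerProductSpace ℂ Hpm] [FiniteDimensional ℂ Hpm]
    [NormedAddCommGroup H2] [InnerProductSpace ℂ H2] [FiniteDimensional ℂ H2]
(θ : Hp ≃ₗ⋆[ℂ] Hm)
    (hθ : ∀ x x' : Hp, ⟪x, x'⟫ = ⟪θ x', θ x⟫)
(tmp : Hm →ₗ[ℂ] Hp →ₗ[ℂ] Hmp) (tpm : Hp →ₗ[ℂ] Hm →ₗ[ℂ] Hpm)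
    (htmp : ∀ (y : Hm) (x : Hp) (y' : Hm) (x' : Hp),
      ⟪tmp y x, tmp y' x'⟫ = ⟪y, y'⟫ * ⟪x, x'⟫)
    (htpm : ∀ (x : Hp) (y : Hm) (x' : Hp) (y' : Hm),
      ⟪tpm x y, tpm x' y'⟫ = ⟪x, x'⟫ * ⟪y, y'⟫)
    (hmp_span : ⊤ ≤ Submodule.span ℂ (Set.range fun p : Hm × Hp => tmp p.1 p.2))
    (hpm_span : ⊤ ≤ Submodule.span ℂ (Set.range fun p : Hp × Hm => tpm p.1 p.2))
(Fs : (Hmp →L[ℂ] Hmp) → (Hpm →L[ℂ] Hpm))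
    (hFs : ∀ (T : Hmp →L[ℂ] Hmp) (x x' : Hp) (y y' : Hm),
      ⟪tpm x y, Fs T (tpm x' y')⟫ = ⟪tmp (θ x') x, T (tmp y' (θ.symm y))⟫)
(t2 : Hpm →ₗ[ℂ] Hpm →ₗ[ℂ] H2)
    (ht2 : ∀ (u v u' v' : Hpm), ⟪t2 u v, t2 u' v'⟫ = ⟪u, u'⟫ * ⟪v, v'⟫)
    (h2_span : ⊤ ≤ Submodule.span ℂ (Set.range fun p : Hpm × Hpm => t2 p.1 p.2))
    (Y : H2 →L[ℂ] Hpm)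
    (hY : ∀ (x₁ : Hp) (y₁ : Hm) (x₂ : Hp) (y₂ : Hm),
      Y (t2 (tpm x₁ y₁) (tpm x₂ y₂)) = ⟪θ.symm y₁, x₂⟫ • tpm x₁ y₂)
(tmap : (Hpm →L[ℂ] Hpm) → (Hpm →L[ℂ] Hpm) → (H2 →L[ℂ] H2))
    (htmap : ∀ (A B : Hpm →L[ℂ] Hpm) (u v : Hpm), tmap A B (t2 u v) = t2 (A u) (B v)) :
    ∀ S T : Hmp →L[ℂ] Hmp,
      Fs (S ∘L T) = Y ∘L tmap (Fs S) (Fs T) ∘L ContinuousLinearMap.adjoint Y :=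
  sft_product_to_convolution_general θ hθ tmp tpm htmp htpm hmp_span hpm_span Fs hFs t2 ht2 h2_span
    Y hY tmap htmap
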